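/- arXiv:0803.3141 — 2 statements merged into one kernel-verified Lean document; each statement's English description precedes it below -/
import Mathlib

section
/- Theorem (stacking/interpolation): Let < be a product order on k[X₁,…,Xₙ], and let A ⊆ 𝔸ⁿ be a variety whose irreducible components are affine d-planes all parallel to the hyperplane {X₁ = 0}. Let Y = p(A) ⊆ 𝔸¹ be the (finite) set of first coordinates of points of A, and for λ ∈ Y let A_λ = A ∩ {X₁ = λ}, regarded as a subvariety of 𝔸ⁿ⁻¹. Then D(A) = Σ_{λ ∈ Y} D(A_λ), the sum being the addition of standard sets (with each D(A_λ) ⊆ ℕⁿ⁻¹ embedded into ℕⁿ via α ↦ (0,α)). -/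
open MvPolynomial

/-- `β` is the leading exponent of `f` with respect to the monomial order `m`. -/
def IsLeadExp {σ : Type*} {k : Type*} [CommSemiring k] (m : MonomialOrder σ)
    (f : MvPolynomial σ k) (β : σ →₀ ℕ) : Prop :=
  β ∈ f.support ∧ ∀ α ∈ f.support, α ≠ β → m.toSyn α < m.toSyn β

/-- `C(I)`: the set of leading exponents of nonzero elements of the ideal `I`. -/
def expC {σ : Type*} {k : Type*} [CommSemiring k] (m : MonomialOrder σ)
    (I : Ideal (MvPolynomial σ k)) : Set (σ →₀ ℕ) :=
  {β | ∃ f ∈ I, IsLeadExp m f β}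

/-- `D(I)`: the standard set (set of exponents of standard monomials) of the ideal `I`. -/
def expD {σ : Type*} {k : Type*} [CommSemiring k] (m : MonomialOrder σ)
    (I : Ideal (MvPolynomial σ k)) : Set (σ →₀ ℕ) :=
  (expC m I)ᶜ

/-- The projection `ℕⁿ → ℕⁿ⁻¹` dropping the first coordinate. -/
noncomputable def pr {n : ℕ} (β : Fin (n + 1) →₀ ℕ) : Fin n →₀ ℕ :=
  Finsupp.comapDomain Fin.succ β (Fin.succ_injective n).injOn

/-- The embedding `ℕⁿ⁻¹ → ℕⁿ`, putting `0` in the first coordinate. -/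
noncomputable def emb {n : ℕ} (α : Fin n →₀ ℕ) : Fin (n + 1) →₀ ℕ :=
  Finsupp.mapDomain Fin.succ α

/-- `t` is a *product order* restricting to `tb`: `α < β` iff `p(α) < p(β)`, or
`p(α) = p(β)` and `α₁ < β₁`, where `p` drops the first coordinate. -/
def IsProductOrder {n : ℕ} (t : MonomialOrder (Fin (n + 1)))
    (tb : MonomialOrder (Fin n)) : Prop :=
  ∀ α β : Fin (n + 1) →₀ ℕ,
    (t.toSyn α < t.toSyn β ↔
      (tb.toSyn (pr α) < tb.toSyn (pr β) ∨ (pr α = pr β ∧ α 0 < β 0)))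

/-- The fiber `A_λ = A ∩ {X₁ = λ}`, regarded as a subvariety of `𝔸ⁿ⁻¹`. -/
def fiberAt {k : Type*} {n : ℕ} (A : Set (Fin (n + 1) → k)) (lam : k) :
    Set (Fin n → k) :=
  {y | Fin.cons lam y ∈ A}

/-- `A′` is a `d`-dimensional affine subspace of the affine space with coordinates `ι`. -/
def IsAffineDPlane {k : Type*} [Field k] {ι : Type*} [Fintype ι] (d : ℕ)
    (A' : Set (ι → k)) : Prop :=
  ∃ S : AffineSubspace k (ι → k),
    A' = (S : Set (ι → k)) ∧ A'.Nonempty ∧ Module.finrank k S.direction = d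

/-- `{X_j : j ∈ J}` is a set of free variables of `A′`. -/
def IsFreeVars {k : Type*} [Field k] {ι : Type*} (A' : Set (ι → k)) (J : Finset ι) :
    Prop :=
  ∀ v : ι → k, ∃! x, x ∈ A' ∧ ∀ j ∈ J, x j = v j

/-- `{X_j : j ∈ J}` is the set of *minimal* free variables of `A′`. -/
def IsMinFreeVars {k : Type*} [Field k] {ι : Type*} [LinearOrder ι] [DecidableEq ι]
    (A' : Set (ι → k)) (J : Finset ι) : Prop :=
  IsFreeVars A' J ∧ ∀ j ∈ J, ∀ i ∉ J, i < j → ¬ IsFreeVars A' (insert i (J.erase j))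

/-! Write `f ∈ k[X₁, X']` as a polynomial in `X₁` and, for each exponent `γ` of `X'`, collect the
coefficients of `X'^γ` into a one-variable polynomial `p_γ(T)`; specializing `X₁ = λ` turns the
`γ`-coefficient into `p_γ(λ)`. For a product order, `β` is the leading exponent of `f` iff
`p_{p(β)}` has degree `β₁` and `p_γ = 0` for all `γ > p(β)`. So if `f ∈ I(A)` leads with `β`, every
`λ` with `p(β) ∈ D(A_λ)` is a root of `p_{p(β)}`, and there are at most `β₁` of them. Conversely,
given at most `β₁` such `λ`, pick `Q` of degree `β₁` vanishing at them; Lagrange interpolation in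
`X₁` corrects `Q(X₁) X'^{p(β)}` on each fibre to `Q(λ) g_λ`, with `g_λ ∈ I(A_λ)` leading with
`p(β)`, while only adding terms below `p(β)`. -/

lemma pr_eq_tail {n : ℕ} (β : Fin (n + 1) →₀ ℕ) : pr β = Finsupp.tail β := by
  ext i
  simp [pr, Finsupp.comapDomain_apply, Finsupp.tail_apply]

lemma pr_cons {n : ℕ} (i : ℕ) (γ : Fin n →₀ ℕ) : pr (Finsupp.cons i γ) = γ := by
  rw [pr_eq_tail, Finsupp.tail_cons]

lemma cons_pr {n : ℕ} (β : Fin (n + 1) →₀ ℕ) : Finsupp.cons (β 0) (pr β) = β := by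
  rw [pr_eq_tail, Finsupp.cons_tail]

section LeadingExponent

variable {σ R : Type*}

theorem isLeadExp_iff [CommSemiring R] (m : MonomialOrder σ) (f : MvPolynomial σ R)
    (β : σ →₀ ℕ) :
    IsLeadExp m f β ↔ coeff β f ≠ 0 ∧ ∀ α, m.toSyn β < m.toSyn α → coeff α f = 0 := by
  refine ⟨fun ⟨hβ, hmax⟩ => ⟨mem_support_iff.1 hβ, fun α hα => ?_⟩,
    fun ⟨hβ, hmax⟩ => ⟨mem_support_iff.2 hβ, fun α hα hne => ?_⟩⟩
  · by_contra h
    exact (hmax α (mem_support_iff.2 h) (by rintro rfl; exact hα.false)).asymm hα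
  · refine (lt_or_gt_of_ne (m.toSyn.injective.ne hne)).resolve_right fun h => ?_
    exact mem_support_iff.1 hα (hmax α h)

theorem exists_sub_monomial_mem_restrictSupport [Field R] {m : MonomialOrder σ}
    {I : Ideal (MvPolynomial σ R)} {β : σ →₀ ℕ} (hβ : β ∈ expC m I) :
    ∃ g ∈ I, g - monomial β 1 ∈ restrictSupport R {α | m.toSyn α < m.toSyn β} := by
  obtain ⟨f, hfI, hf⟩ := hβ
  obtain ⟨hβ, hmax⟩ := (isLeadExp_iff m f β).1 hf
  refine ⟨C (coeff β f)⁻¹ * f, I.mul_mem_left _ hfI, (mem_restrictSupport_iff R).2 fun α hα => ?_⟩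
  classical
  rw [Finset.mem_coe, mem_support_iff, coeff_sub, coeff_C_mul, coeff_monomial, sub_ne_zero] at hα
  rcases lt_trichotomy (m.toSyn α) (m.toSyn β) with h | h | h
  · exact h
  · rw [m.toSyn.injective h, if_pos rfl, inv_mul_cancel₀ hβ] at hα
    exact absurd rfl hα
  · rw [hmax α h, mul_zero, if_neg fun h' => h.ne (congrArg _ h')] at hα
    exact absurd rfl hα

end LeadingExponent

namespace Polynomial

variable {R : Type*}

theorem degree_eq_iff_coeff [Semiring R] {p : R[X]} {n : ℕ} :
    p.degree = n ↔ p.coeff n ≠ 0 ∧ ∀ i, n < i → p.coeff i = 0 := by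
  refine ⟨fun h => ⟨coeff_ne_zero_of_eq_degree h, fun i hi => coeff_eq_zero_of_degree_lt ?_⟩,
    fun ⟨hn, hi⟩ => degree_eq_of_le_of_coeff_ne_zero ((degree_le_iff_coeff_zero _ _).2
      fun i h => hi i (by exact_mod_cast h)) hn⟩
  rw [h]
  exact_mod_cast hi

theorem exists_degree_eq_of_ncard_le [Field R] {s : Set R} (hs : s.Finite) {n : ℕ}
    (h : s.ncard ≤ n) : ∃ Q : R[X], Q.degree = n ∧ ∀ a ∈ s, Q.eval a = 0 := by
  classical
  refine ⟨X ^ (n - s.ncard) * ∏ a ∈ hs.toFinset, (X - C a), ?_, fun a ha => ?_⟩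
  · rw [degree_mul, degree_X_pow, degree_prod]
    simp only [degree_X_sub_C, Finset.sum_const, nsmul_one, ← Set.ncard_eq_toFinset_card s hs]
    exact_mod_cast Nat.sub_add_cancel h
  · rw [eval_mul, eval_prod, Finset.prod_eq_zero (hs.mem_toFinset.2 ha) (by simp), mul_zero]

theorem exists_interpolate_coeff_mem {k : Type*} [Field k] [CommRing R] [Algebra k R]
    (N : Submodule k R) (s : Finset k) (v : k → R) (hv : ∀ a ∈ s, v a ∈ N) :
    ∃ F : R[X], (∀ a ∈ s, F.eval (algebraMap k R a) = v a) ∧ ∀ i, F.coeff i ∈ N := by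
  classical
  refine ⟨∑ a ∈ s, C (v a) * (Lagrange.basis s id a).map (algebraMap k R), fun b hb => ?_,
    fun i => ?_⟩
  · have hself : eval b (Lagrange.basis s id b) = 1 :=
      Lagrange.eval_basis_self (Set.injOn_id _) hb
    rw [eval_finsetSum, Finset.sum_eq_single_of_mem b hb]
    · rw [eval_mul, eval_C, eval_map_algebraMap, aeval_algebraMap_apply, coe_aeval_eq_eval,
        hself, map_one, mul_one]
    · intro c _ hcb
      have hne : eval b (Lagrange.basis s id c) = 0 := Lagrange.eval_basis_of_ne (v := id) hcb hb
      rw [eval_mul, eval_map_algebraMap, aeval_algebraMap_apply, coe_aeval_eq_eval,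
        hne, map_zero, mul_zero]
  · rw [finsetSum_coeff]
    refine N.sum_mem fun a ha => ?_
    rw [coeff_C_mul, coeff_map, mul_comm, ← Algebra.smul_def]
    exact N.smul_mem _ (hv a ha)

end Polynomial

section Fibers

variable {R : Type*} [CommSemiring R]

noncomputable def coeffPoly {σ : Type*} (γ : σ →₀ ℕ) (F : Polynomial (MvPolynomial σ R)) :
    Polynomial R :=
  F.sum fun i p => Polynomial.monomial i (coeff γ p)

theorem coeff_coeffPoly {σ : Type*} (γ : σ →₀ ℕ) (F : Polynomial (MvPolynomial σ R)) (i : ℕ) :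
    (coeffPoly γ F).coeff i = coeff γ (F.coeff i) := by
  classical
  rw [coeffPoly, Polynomial.sum_def, Polynomial.finsetSum_coeff]
  simp only [Polynomial.coeff_monomial, Finset.sum_ite_eq', Polynomial.mem_support_iff]
  split_ifs with h
  · rfl
  · rw [not_not.1 h, coeff_zero]

theorem eval_coeffPoly {σ : Type*} (γ : σ →₀ ℕ) (F : Polynomial (MvPolynomial σ R)) (a : R) :
    (coeffPoly γ F).eval a = coeff γ (F.eval (C a)) := by
  rw [coeffPoly, Polynomial.sum_def, Polynomial.eval_finsetSum, Polynomial.eval_eq_sum,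
    Polynomial.sum_def, coeff_sum]
  refine Finset.sum_congr rfl fun i _ => ?_
  rw [Polynomial.eval_monomial, ← C_pow, mul_comm (F.coeff i), coeff_C_mul, mul_comm]

variable {n : ℕ}

theorem eval_cons_eq_eval_eval_finSuccEquiv (f : MvPolynomial (Fin (n + 1)) R) (a : R)
    (x : Fin n → R) :
    eval (Fin.cons a x) f = eval x ((finSuccEquiv R n f).eval (C a)) := by
  rw [eval_eq_eval_mv_eval', Polynomial.eval_map, Polynomial.eval, Polynomial.hom_eval₂,
    RingHom.comp_id, eval_C]

theorem mem_vanishingIdeal_iff_forall_fiberAt {k : Type*} [Field k] {A : Set (Fin (n + 1) → k)}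
    {f : MvPolynomial (Fin (n + 1)) k} :
    f ∈ vanishingIdeal k A ↔ ∀ a ∈ (fun x => x 0) '' A,
      (finSuccEquiv k n f).eval (C a) ∈ vanishingIdeal k (fiberAt A a) := by
  simp only [mem_vanishingIdeal_iff, aeval_eq_eval, ← eval_cons_eq_eval_eval_finSuccEquiv]
  refine ⟨fun h a _ y hy => h _ hy, fun h x hx => ?_⟩
  rw [← Fin.cons_self_tail x]
  exact h _ ⟨x, hx, rfl⟩ _ (by rwa [fiberAt, Set.mem_ofPred_eq, Fin.cons_self_tail])

end Fibers

namespace IsProductOrder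

variable {n : ℕ} {t : MonomialOrder (Fin (n + 1))} {tb : MonomialOrder (Fin n)}

theorem lt_cons_iff (hprod : IsProductOrder t tb) (β : Fin (n + 1) →₀ ℕ) (i : ℕ)
    (γ : Fin n →₀ ℕ) :
    t.toSyn β < t.toSyn (Finsupp.cons i γ) ↔
      tb.toSyn (pr β) < tb.toSyn γ ∨ (pr β = γ ∧ β 0 < i) := by
  rw [hprod, pr_cons, Finsupp.cons_zero]

theorem isLeadExp_iff {R : Type*} [CommSemiring R] (hprod : IsProductOrder t tb)
    (f : MvPolynomial (Fin (n + 1)) R) (β : Fin (n + 1) →₀ ℕ) :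
    IsLeadExp t f β ↔ (coeffPoly (pr β) (finSuccEquiv R n f)).degree = β 0 ∧
      ∀ γ, tb.toSyn (pr β) < tb.toSyn γ → coeffPoly γ (finSuccEquiv R n f) = 0 := by
  have hc (i : ℕ) (γ : Fin n →₀ ℕ) :
      (coeffPoly γ (finSuccEquiv R n f)).coeff i = coeff (Finsupp.cons i γ) f := by
    rw [coeff_coeffPoly, finSuccEquiv_coeff_coeff]
  simp only [_root_.isLeadExp_iff, Polynomial.degree_eq_iff_coeff, Polynomial.ext_iff, hc,
    Polynomial.coeff_zero, cons_pr]
  constructor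
  · rintro ⟨hβ, hmax⟩
    exact ⟨⟨hβ, fun i hi => hmax _ ((hprod.lt_cons_iff β i _).2 (Or.inr ⟨rfl, hi⟩))⟩,
      fun γ hγ i => hmax _ ((hprod.lt_cons_iff β i γ).2 (Or.inl hγ))⟩
  · rintro ⟨⟨hβ, hfirst⟩, hrest⟩
    refine ⟨hβ, fun α hα => ?_⟩
    rw [← cons_pr α] at hα ⊢
    rcases (hprod.lt_cons_iff β _ _).1 hα with h | ⟨h, h'⟩
    · exact hrest _ h _
    · rw [← h]
      exact hfirst _ h'

end IsProductOrder

section Stacking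

variable {k : Type*} [Field k] {n : ℕ} {t : MonomialOrder (Fin (n + 1))}
  {tb : MonomialOrder (Fin n)}

theorem ncard_le_of_isLeadExp (hprod : IsProductOrder t tb) {A : Set (Fin (n + 1) → k)}
    {f : MvPolynomial (Fin (n + 1)) k} (hf : f ∈ vanishingIdeal k A) {β : Fin (n + 1) →₀ ℕ}
    (hβ : IsLeadExp t f β) :
    {a ∈ (fun x => x 0) '' A | pr β ∈ expD tb (vanishingIdeal k (fiberAt A a))}.ncard ≤ β 0 := by
  obtain ⟨hdeg, hrest⟩ := (hprod.isLeadExp_iff f β).1 hβ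
  set p := coeffPoly (pr β) (finSuccEquiv k n f)
  have hroots : {a ∈ (fun x => x 0) '' A | pr β ∈ expD tb (vanishingIdeal k (fiberAt A a))} ⊆
      p.rootSet k := by
    rintro a ⟨ha, hD⟩
    rw [Polynomial.mem_rootSet_of_ne (Polynomial.ne_zero_of_coe_le_degree hdeg.ge),
      Polynomial.coe_aeval_eq_eval, eval_coeffPoly]
    by_contra hne
    refine hD ⟨_, mem_vanishingIdeal_iff_forall_fiberAt.1 hf a ha,
      (isLeadExp_iff tb _ _).2 ⟨hne, fun γ hγ => ?_⟩⟩
    rw [← eval_coeffPoly, hrest γ hγ, Polynomial.eval_zero]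
  calc _ ≤ (p.rootSet k).ncard := Set.ncard_le_ncard hroots (Polynomial.rootSet_finite _ _)
    _ ≤ p.natDegree := Polynomial.ncard_rootSet_le _ _
    _ = β 0 := Polynomial.natDegree_eq_of_degree_eq_some hdeg

theorem mem_expC_of_ncard_le (hprod : IsProductOrder t tb) {A : Set (Fin (n + 1) → k)}
    (hY : ((fun x => x 0) '' A).Finite) {β : Fin (n + 1) →₀ ℕ}
    (hβ : {a ∈ (fun x => x 0) '' A | pr β ∈ expD tb (vanishingIdeal k (fiberAt A a))}.ncard ≤
      β 0) :
    β ∈ expC t (vanishingIdeal k A) := by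
  obtain ⟨Q, hQdeg, hQroots⟩ :=
    Polynomial.exists_degree_eq_of_ncard_le (hY.subset (Set.sep_subset _ _)) hβ
  set M : MvPolynomial (Fin n) k := monomial (pr β) 1
  set N := restrictSupport k {γ | tb.toSyn γ < tb.toSyn (pr β)}
  have hN : ∀ p ∈ N, ∀ γ, ¬ tb.toSyn γ < tb.toSyn (pr β) → coeff γ p = 0 :=
    fun p hp γ hγ => notMem_support_iff.1 fun h => hγ (hp h)
  have hfiber : ∀ a ∈ (fun x => x 0) '' A,
      ∃ g ∈ vanishingIdeal k (fiberAt A a), g - Q.eval a • M ∈ N := by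
    intro a ha
    by_cases hD : pr β ∈ expD tb (vanishingIdeal k (fiberAt A a))
    · refine ⟨0, zero_mem _, ?_⟩
      rw [hQroots a ⟨ha, hD⟩, zero_smul, sub_zero]
      exact zero_mem _
    · obtain ⟨g, hgI, hg⟩ := exists_sub_monomial_mem_restrictSupport (not_not.1 hD)
      refine ⟨Q.eval a • g, Submodule.smul_of_tower_mem _ _ hgI, ?_⟩
      rw [← smul_sub]
      exact N.smul_mem _ hg
  choose! g hgI hgN using hfiber
  obtain ⟨G, hGeval, hGcoeff⟩ := Polynomial.exists_interpolate_coeff_mem N hY.toFinset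
    (fun a => g a - Q.eval a • M) fun a ha => hgN a (hY.mem_toFinset.1 ha)
  set F := Q.map C * Polynomial.C M + G
  have hF (i : ℕ) (γ : Fin n →₀ ℕ) :
      coeff γ (F.coeff i) = Q.coeff i * coeff γ M + coeff γ (G.coeff i) := by
    rw [Polynomial.coeff_add, Polynomial.coeff_mul_C, Polynomial.coeff_map, coeff_add,
      coeff_C_mul]
  refine ⟨(finSuccEquiv k n).symm F, ?_, (hprod.isLeadExp_iff _ β).2 ?_⟩
  · rw [mem_vanishingIdeal_iff_forall_fiberAt, AlgEquiv.apply_symm_apply]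
    intro a ha
    have hGa := hGeval a (hY.mem_toFinset.2 ha)
    rw [algebraMap_eq] at hGa
    rw [Polynomial.eval_add, hGa, Polynomial.eval_mul, Polynomial.eval_map, Polynomial.eval_C,
      Polynomial.eval₂_at_apply, ← smul_eq_C_mul, add_sub_cancel]
    exact hgI a ha
  · rw [AlgEquiv.apply_symm_apply]
    refine ⟨?_, fun γ hγ => Polynomial.ext fun i => ?_⟩
    · have hpr : coeffPoly (pr β) F = Q := Polynomial.ext fun i => by
        rw [coeff_coeffPoly, hF, coeff_monomial, if_pos rfl, mul_one,
          hN _ (hGcoeff i) _ (lt_irrefl _), add_zero]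
      rw [hpr, hQdeg]
    · rw [coeff_coeffPoly, hF, coeff_monomial, if_neg (fun h => hγ.ne (congrArg _ h)), mul_zero,
        zero_add, hN _ (hGcoeff i) _ hγ.asymm, Polynomial.coeff_zero]

end Stacking

theorem stacking_general {k : Type*} [Field k] {n mm : ℕ}
    (t : MonomialOrder (Fin (n + 1))) (tb : MonomialOrder (Fin n))
    (hprod : IsProductOrder t tb)
    (P : Fin mm → Set (Fin (n + 1) → k))
    (hpar : ∀ c, ∀ x ∈ P c, ∀ y ∈ P c, x 0 = y 0)
    (A : Set (Fin (n + 1) → k)) (hA : A = ⋃ c, P c) :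
    expD t (MvPolynomial.vanishingIdeal k A) =
      {β : Fin (n + 1) →₀ ℕ |
        β 0 < {lam ∈ (fun x => x 0) '' A |
          pr β ∈ expD tb (MvPolynomial.vanishingIdeal k (fiberAt A lam))}.ncard} := by
  have hY : ((fun x : Fin (n + 1) → k => x 0) '' A).Finite := by
    rw [hA, Set.image_iUnion]
    exact Set.finite_iUnion fun c => Set.Subsingleton.finite <| by
      rintro _ ⟨x, hx, rfl⟩ _ ⟨y, hy, rfl⟩
      exact hpar c x hx y hy
  ext β
  rw [expD, Set.mem_compl_iff, Set.mem_ofPred_eq, ← not_le, not_iff_not]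
  exact ⟨fun ⟨f, hf, hβ⟩ => ncard_le_of_isLeadExp hprod hf hβ, mem_expC_of_ncard_le hprod hY⟩

/-- Theorem (stacking): if `<` is a product order and all components of `A` are affine
`d`-planes parallel to `{X₁ = 0}`, then `D(A) = Σ_{λ∈Y} D(A_λ)`, `Y = p(A)`; in closed
form, `β ∈ D(A)` iff `β₁ < #{λ ∈ Y : p(β) ∈ D(A_λ)}` (each `D(A_λ) ⊆ ℕⁿ⁻¹` being
embedded into `ℕⁿ` via `α ↦ (0,α)`). -/
theorem stacking {k : Type*} [Field k] [Infinite k] {n d mm : ℕ}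
    (t : MonomialOrder (Fin (n + 1))) (tb : MonomialOrder (Fin n))
    (hprod : IsProductOrder t tb)
    (P : Fin mm → Set (Fin (n + 1) → k))
    (hP : ∀ c, IsAffineDPlane d (P c))
    (hpar : ∀ c, ∀ x ∈ P c, ∀ y ∈ P c, x 0 = y 0)
    (A : Set (Fin (n + 1) → k)) (hA : A = ⋃ c, P c) :
    expD t (MvPolynomial.vanishingIdeal k A) =
      {β : Fin (n + 1) →₀ ℕ |
        β 0 < {lam ∈ (fun x => x 0) '' A |
          pr β ∈ expD tb (MvPolynomial.vanishingIdeal k (fiberAt A lam))}.ncard} :=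
  stacking_general t tb hprod P hpar A hA
end

section
/- Let < be a product order on k[X₁,…,Xₙ], Y ⊆ k finite, and split Y = Y′ ⊔ Y″, where for each λ ∈ Y″ we are given an ideal I_λ ⊆ k[X₂,…,Xₙ] with α ∈ C(I_λ) witnessed by a monic f_λ ∈ I_λ with LE(f_λ) = α, written f_λ = X̄^α + Σ_{β<α} c_{λ,β} X̄^β. Then, with χ_λ ∈ k[X₁] the Lagrange interpolation polynomials on Y″ (χ_λ(μ) = δ_{λμ}, deg χ_λ = #Y″−1), the polynomial g = (X̄^α + Σ_{λ∈Y″} Σ_{β<α} χ_λ c_{λ,β} X̄^β) · ∏_{λ∈Y′}(X₁−λ) satisfies: g(λ, X̄) = 0 for λ ∈ Y′, g(λ, X̄) is a scalar multiple of f_λ for λ ∈ Y″, and LE(g) = (#Y′, α). -/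
open MvPolynomial

section Helpers

variable {σ K : Type*} [CommRing K] [IsDomain K]

lemma IsLeadExp.le {m : MonomialOrder σ} {f : MvPolynomial σ K} {β : σ →₀ ℕ}
    (hf : IsLeadExp m f β) {δ : σ →₀ ℕ} (hδ : δ ∈ f.support) : m.toSyn δ ≤ m.toSyn β := by
  rcases eq_or_ne δ β with rfl | h
  · exact le_rfl
  · exact (hf.2 δ hδ h).le

set_option maxHeartbeats 1000000 in
lemma IsLeadExp.mul {m : MonomialOrder σ} {f g : MvPolynomial σ K} {β γ : σ →₀ ℕ}
    (hf : IsLeadExp m f β) (hg : IsLeadExp m g γ) : IsLeadExp m (f * g) (β + γ) := by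
  classical
  have key : ∀ δ ∈ (f * g).support, m.toSyn δ ≤ m.toSyn (β + γ) := by
    intro δ hδ
    obtain ⟨a, ha, b, hb, rfl⟩ := Finset.mem_add.mp (MvPolynomial.support_mul f g hδ)
    rw [map_add, map_add]
    exact add_le_add (hf.le ha) (hg.le hb)
  have hcoeff : coeff (β + γ) (f * g) = coeff β f * coeff γ g := by
    rw [coeff_mul]
    apply Finset.sum_eq_single (β, γ)
    · rintro ⟨a, b⟩ hab hne
      rcases eq_or_ne (coeff a f) 0 with h0 | h0
      · rw [h0, zero_mul]
      rcases eq_or_ne (coeff b g) 0 with h1 | h1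
      · rw [h1, mul_zero]
      exfalso
      have hab' : a + b = β + γ := Finset.HasAntidiagonal.mem_antidiagonal.mp hab
      have h2 : m.toSyn a ≤ m.toSyn β := hf.le (mem_support_iff.mpr h0)
      have h3 : m.toSyn b ≤ m.toSyn γ := hg.le (mem_support_iff.mpr h1)
      have h4 : m.toSyn a + m.toSyn b = m.toSyn β + m.toSyn γ := by
        rw [← map_add, ← map_add, hab']
      have ha' : m.toSyn a = m.toSyn β := by
        by_contra hne'
        exact absurd h4 (add_lt_add_of_lt_of_le (lt_of_le_of_ne h2 hne') h3).ne
      have haβ : a = β := m.toSyn.injective ha'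
      subst haβ
      have hbγ : b = γ := by
        have : a + b = a + γ := hab'
        exact add_left_cancel this
      exact hne (by rw [hbγ])
    · intro h
      simp at h
  constructor
  · exact mem_support_iff.mpr (by
      rw [hcoeff]
      exact mul_ne_zero (mem_support_iff.mp hf.1) (mem_support_iff.mp hg.1))
  · intro δ hδ hne
    exact lt_of_le_of_ne (key δ hδ) (fun h => hne (m.toSyn.injective h))

end Helpers

section PrEmb

variable {n : ℕ}

lemma pr_add (a b : Fin (n + 1) →₀ ℕ) : pr (a + b) = pr a + pr b :=
  Finsupp.comapDomain_add_of_injective (Fin.succ_injective n) a b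

lemma pr_emb (α : Fin n →₀ ℕ) : pr (emb α) = α := by
  ext i
  simp [pr, emb, Finsupp.comapDomain_apply, Finsupp.mapDomain_apply (Fin.succ_injective n)]

lemma pr_single0 (e : ℕ) : pr (Finsupp.single (0 : Fin (n + 1)) e) = 0 := by
  ext i
  simp [pr, Finsupp.comapDomain_apply, Finsupp.single_apply, (Fin.succ_ne_zero i).symm]

lemma pr_zero : pr (0 : Fin (n + 1) →₀ ℕ) = 0 := by
  ext i; simp [pr, Finsupp.comapDomain_apply]

lemma support_aeval_X0 {K : Type*} [CommRing K] (p : Polynomial K)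
    {δ : Fin (n + 1) →₀ ℕ}
    (hδ : δ ∈ (Polynomial.aeval (MvPolynomial.X 0 : MvPolynomial (Fin (n + 1)) K) p).support) :
    ∃ e : ℕ, δ = Finsupp.single 0 e := by
  classical
  rw [Polynomial.aeval_eq_sum_range] at hδ
  have := MvPolynomial.support_sum hδ
  obtain ⟨e, -, he⟩ := Finset.mem_biUnion.mp this
  refine ⟨e, ?_⟩
  have h1 := Finsupp.support_smul he
  rw [MvPolynomial.X_pow_eq_monomial] at h1
  have := MvPolynomial.support_monomial_subset h1
  simpa using this

end PrEmb

section LeadLemmas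

variable {k : Type*} [Field k] {n : ℕ} {t : MonomialOrder (Fin (n + 1))}
  {tb : MonomialOrder (Fin n)}

lemma factor_lead (hprod : IsProductOrder t tb) (a : k) :
    IsLeadExp t (MvPolynomial.X 0 - MvPolynomial.C a : MvPolynomial (Fin (n + 1)) k)
      (Finsupp.single 0 1) := by
  classical
  constructor
  · rw [MvPolynomial.mem_support_iff, MvPolynomial.coeff_sub, MvPolynomial.coeff_X',
      MvPolynomial.coeff_C, if_pos rfl, if_neg (fun h => one_ne_zero (Finsupp.single_eq_zero.mp h.symm))]
    simp
  · intro δ hδ hne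
    have hδ0 : δ = 0 := by
      by_contra h0
      apply MvPolynomial.mem_support_iff.mp hδ
      rw [MvPolynomial.coeff_sub, MvPolynomial.coeff_X', MvPolynomial.coeff_C,
        if_neg (Ne.symm hne), if_neg (fun h => h0 h.symm), sub_zero]
    subst hδ0
    apply (hprod 0 (Finsupp.single 0 1)).mpr
    right
    refine ⟨by rw [pr_zero, pr_single0], ?_⟩
    simp

lemma prod_lead (hprod : IsProductOrder t tb) (s : Finset k) :
    IsLeadExp t (∏ lam ∈ s, (MvPolynomial.X 0 - MvPolynomial.C lam) :
        MvPolynomial (Fin (n + 1)) k)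
      (Finsupp.single 0 s.card) := by
  classical
  induction s using Finset.cons_induction with
  | empty =>
    simp only [Finset.prod_empty, Finset.card_empty, Finsupp.single_zero]
    constructor
    · rw [MvPolynomial.mem_support_iff]
      simp
    · intro δ hδ hne
      exfalso
      apply hne
      rw [MvPolynomial.mem_support_iff, MvPolynomial.coeff_one] at hδ
      by_contra h
      exact hδ (by rw [if_neg (fun h' => h h'.symm)])
  | cons a s ha ih =>
    rw [Finset.prod_cons, Finset.card_cons, add_comm s.card 1, Finsupp.single_add]
    exact (factor_lead hprod a).mul ih

end LeadLemmas

open Polynomial in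
/-- Interpolation lemma: with `Y = Y′ ⊔ Y″ ⊆ k`, monic `f_λ ∈ I_λ` with leading exponent
`α` for `λ ∈ Y″`, and `χ_λ` the Lagrange basis polynomials on `Y″`, the polynomial
`g = (X̄^α + Σ_{λ∈Y″} χ_λ·(f_λ − X̄^α)) · ∏_{λ∈Y′}(X₁−λ)` vanishes under `X₁ := λ` for
`λ ∈ Y′`, specializes to a scalar multiple of `f_λ` for `λ ∈ Y″`, and has leading
exponent `(#Y′, α)` with respect to the product order. -/
theorem interpolation_lemma {k : Type*} [Field k] [DecidableEq k] {n : ℕ}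
    (t : MonomialOrder (Fin (n + 1))) (tb : MonomialOrder (Fin n))
    (hprod : IsProductOrder t tb)
    (Y' Y'' : Finset k) (hdisj : Disjoint Y' Y'')
    (Ilam : k → Ideal (MvPolynomial (Fin n) k))
    (α : Fin n →₀ ℕ) (f : k → MvPolynomial (Fin n) k)
    (hf : ∀ lam ∈ Y'', f lam ∈ Ilam lam ∧ MvPolynomial.coeff α (f lam) = 1 ∧
      IsLeadExp tb (f lam) α)
    (g : MvPolynomial (Fin (n + 1)) k)
    (hg : g =
      (MvPolynomial.rename Fin.succ (MvPolynomial.monomial α (1 : k)) +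
        ∑ lam ∈ Y'',
          Polynomial.aeval (MvPolynomial.X 0 : MvPolynomial (Fin (n + 1)) k)
              (Lagrange.basis Y'' id lam) *
            MvPolynomial.rename Fin.succ (f lam - MvPolynomial.monomial α 1)) *
      ∏ lam ∈ Y', (MvPolynomial.X 0 - MvPolynomial.C lam)) :
    (∀ lam ∈ Y',
        MvPolynomial.aeval (Fin.cases (MvPolynomial.C lam) MvPolynomial.X) g = 0) ∧
      (∀ lam ∈ Y'', ∃ c : k,
        MvPolynomial.aeval (Fin.cases (MvPolynomial.C lam) MvPolynomial.X) g =
          c • f lam) ∧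
      IsLeadExp t g (Finsupp.single 0 Y'.card + emb α) := by
  classical
  refine ⟨?_, ?_, ?_⟩
  · -- vanishing on Y'
    intro lam hlam
    rw [hg, map_mul, map_prod]
    have h0 : (MvPolynomial.aeval (Fin.cases (MvPolynomial.C lam) MvPolynomial.X))
        (MvPolynomial.X (0 : Fin (n + 1)) - MvPolynomial.C lam) = 0 := by
      simp
    rw [Finset.prod_eq_zero hlam h0, mul_zero]
  · -- specialization on Y''
    intro lam hlam
    refine ⟨∏ mu ∈ Y', (lam - mu), ?_⟩
    have hren : ∀ p : MvPolynomial (Fin n) k,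
        (MvPolynomial.aeval (Fin.cases (MvPolynomial.C lam) MvPolynomial.X))
          (MvPolynomial.rename Fin.succ p) = p := by
      intro p
      rw [MvPolynomial.aeval_rename]
      have hcomp : ((Fin.cases (MvPolynomial.C lam) MvPolynomial.X) ∘ Fin.succ :
          Fin n → MvPolynomial (Fin n) k) = MvPolynomial.X := by
        funext i; simp
      rw [hcomp, MvPolynomial.aeval_X_left_apply]
    have hχ : ∀ mu : k,
        (MvPolynomial.aeval (Fin.cases (MvPolynomial.C lam) MvPolynomial.X))
            (Polynomial.aeval (MvPolynomial.X 0 : MvPolynomial (Fin (n + 1)) k)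
              (Lagrange.basis Y'' id mu))
          = MvPolynomial.C (Polynomial.eval lam (Lagrange.basis Y'' id mu)) := by
      intro mu
      rw [← Polynomial.aeval_algHom_apply]
      simp only [MvPolynomial.aeval_X, Fin.cases_zero]
      rw [← MvPolynomial.algebraMap_eq,
        Polynomial.aeval_algebraMap_apply_eq_algebraMap_eval]
    rw [hg, map_mul, map_prod, map_add, map_sum]
    have hsum : ∑ mu ∈ Y'',
        (MvPolynomial.aeval (Fin.cases (MvPolynomial.C lam) MvPolynomial.X))
          (Polynomial.aeval (MvPolynomial.X 0 : MvPolynomial (Fin (n + 1)) k)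
              (Lagrange.basis Y'' id mu) *
            MvPolynomial.rename Fin.succ (f mu - MvPolynomial.monomial α 1))
        = f lam - MvPolynomial.monomial α 1 := by
      rw [Finset.sum_congr rfl (fun mu _ => by rw [map_mul, hχ mu, hren])]
      rw [Finset.sum_eq_single lam]
      · rw [show Polynomial.eval lam (Lagrange.basis Y'' id lam)
            = Polynomial.eval (id lam) (Lagrange.basis Y'' id lam) from rfl,
          Lagrange.eval_basis_self (Set.injOn_id _) hlam]
        simp
      · intro mu hmu hne
        rw [show Polynomial.eval lam (Lagrange.basis Y'' id mu)
            = Polynomial.eval (id lam) (Lagrange.basis Y'' id mu) from rfl,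
          Lagrange.eval_basis_of_ne hne hlam]
        simp
      · intro h; exact absurd hlam h
    rw [hsum, hren]
    have hfac : ∀ mu : k,
        (MvPolynomial.aeval (Fin.cases (MvPolynomial.C lam) MvPolynomial.X))
          (MvPolynomial.X (0 : Fin (n + 1)) - MvPolynomial.C mu)
        = MvPolynomial.C (lam - mu) := by
      intro mu; simp
    rw [Finset.prod_congr rfl (fun mu _ => hfac mu), ← map_prod]
    rw [show MvPolynomial.monomial α (1 : k) + (f lam - MvPolynomial.monomial α 1)
        = f lam by ring]
    rw [MvPolynomial.smul_eq_C_mul, mul_comm]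
  · -- leading exponent
    rw [hg]
    have hsuppbound : ∀ mu ∈ Y'', ∀ δ ∈
        (Polynomial.aeval (MvPolynomial.X 0 : MvPolynomial (Fin (n + 1)) k)
            (Lagrange.basis Y'' id mu) *
          MvPolynomial.rename Fin.succ (f mu - MvPolynomial.monomial α 1)).support,
        tb.toSyn (pr δ) < tb.toSyn α := by
      intro mu hmu δ hδ
      obtain ⟨a, ha, b, hb, rfl⟩ := Finset.mem_add.mp (MvPolynomial.support_mul _ _ hδ)
      obtain ⟨e, rfl⟩ := support_aeval_X0 _ ha
      rw [MvPolynomial.support_rename_of_injective (Fin.succ_injective n)] at hb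
      obtain ⟨β, hβ, rfl⟩ := Finset.mem_image.mp hb
      rw [pr_add, pr_single0, zero_add,
        show Finsupp.mapDomain Fin.succ β = emb β from rfl, pr_emb]
      have hβα : β ≠ α := by
        intro h
        subst h
        apply MvPolynomial.mem_support_iff.mp hβ
        rw [MvPolynomial.coeff_sub, MvPolynomial.coeff_monomial, if_pos rfl,
          (hf mu hmu).2.1, sub_self]
      have hβf : β ∈ (f mu).support := by
        rw [MvPolynomial.mem_support_iff]
        intro h0
        apply MvPolynomial.mem_support_iff.mp hβ
        rw [MvPolynomial.coeff_sub, h0, MvPolynomial.coeff_monomial,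
          if_neg (fun h => hβα h.symm), sub_self]
      exact (hf mu hmu).2.2.2 β hβf hβα
    have hF : IsLeadExp t
        (MvPolynomial.rename Fin.succ (MvPolynomial.monomial α (1 : k)) +
          ∑ lam ∈ Y'',
            Polynomial.aeval (MvPolynomial.X 0 : MvPolynomial (Fin (n + 1)) k)
                (Lagrange.basis Y'' id lam) *
              MvPolynomial.rename Fin.succ (f lam - MvPolynomial.monomial α 1))
        (emb α) := by
      constructor
      · rw [MvPolynomial.mem_support_iff, MvPolynomial.coeff_add, MvPolynomial.rename_monomial,
          MvPolynomial.coeff_monomial,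
          if_pos (show Finsupp.mapDomain Fin.succ α = emb α from rfl), MvPolynomial.coeff_sum]
        rw [Finset.sum_eq_zero]
        · simp
        · intro mu hmu
          by_contra hne
          have hmem : emb α ∈ (Polynomial.aeval
              (MvPolynomial.X 0 : MvPolynomial (Fin (n + 1)) k)
                (Lagrange.basis Y'' id mu) *
              MvPolynomial.rename Fin.succ (f mu - MvPolynomial.monomial α 1)).support :=
            MvPolynomial.mem_support_iff.mpr hne
          have := hsuppbound mu hmu _ hmem
          rw [pr_emb] at this
          exact lt_irrefl _ this
      · intro δ hδ hne
        rcases Finset.mem_union.mp (MvPolynomial.support_add hδ) with h | h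
        · exfalso
          apply hne
          rw [MvPolynomial.rename_monomial] at h
          exact Finset.mem_singleton.mp (MvPolynomial.support_monomial_subset h)
        · obtain ⟨mu, hmu, hδ'⟩ := Finset.mem_biUnion.mp (MvPolynomial.support_sum h)
          apply (hprod δ (emb α)).mpr
          left
          rw [pr_emb]
          exact hsuppbound mu hmu δ hδ'
    have hmul := hF.mul (prod_lead hprod Y')
    rw [add_comm (Finsupp.single 0 Y'.card) (emb α)]
    exact hmul
end
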